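/- For every odd integer d ≥ 3, let φ_d : ℂ³ → ℂ³ be given by φ_d(x, y, z) = (I·(x − y)^d, (x + y)^d, z^d). There do not exist a matrix A ∈ GL₃(ℂ) and polynomials ψ₀, ψ₁, ψ₂ in three variables with rational coefficients, each homogeneous of degree d, such that for every v ∈ ℂ³ with v ≠ 0 there exists c ∈ ℂ with c ≠ 0 such that (ψ₀(v), ψ₁(v), ψ₂(v)) = c • (A⁻¹·φ_d(A·v)) (the ψᵢ evaluated in ℂ via ℚ ⊆ ℂ). That is, for every odd d ≥ 3, ℚ is not a field of definition for the conjugacy class of φ_d. -/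

import Mathlib

open Matrix

noncomputable def phiD (d : ℕ) (v : Fin 3 → ℂ) : Fin 3 → ℂ :=
  ![Complex.I * (v 0 - v 1) ^ d, (v 0 + v 1) ^ d, (v 2) ^ d]

/-!
Complex conjugation fixes a model of `φ = phiD d` over `ℚ`, and for odd `d` it turns `φ` into
`φ ∘ S`, where `S = swap01` swaps the first two coordinates. Hence the conjugating matrix `A`
yields a cocycle `K = Ā A⁻¹` (so `K K̄ = 1`) with `φ ∘ (S K) = K ∘ φ` up to scalars.

Write `φ = D ∘ (·)^d ∘ P` with `P = rot : (x, y, z) ↦ (x - y, x + y, z)` and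
`D = diagonal twist = diag(I, 1, 1)`. Then `C = P S K P⁻¹` semiconjugates the coordinatewise
`d`-th power map to `D⁻¹ K D` up to scalars. For `d ≥ 2` this forces `C` to be monomial with
`C i j ^ d = c (D⁻¹ K D) i j`: expanding `(C (e_j + t e_k))^d` to first order in `t` shows that
two nonzero entries in a row would make two columns of `C` proportional. So `K` and `P S K P⁻¹`
have the same monomial zero pattern. On the first two coordinates this leaves `K = diag(a, a)`,
where `(-a)^d = a^d` is impossible for odd `d`, or `K = (0, b; -b, 0)`, where `K K̄ = 1` reads
`-|b|² = 1`.
-/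

def ProjectivelyEq {F ι κ : Type*} [Field F] (f g : (ι → F) → κ → F) : Prop :=
  ∀ v ≠ 0, ∃ c : F, c ≠ 0 ∧ f v = c • g v

namespace ProjectivelyEq

variable {F ι κ : Type*} [Field F] {f g h : (ι → F) → κ → F}

theorem symm (hfg : ProjectivelyEq f g) : ProjectivelyEq g f := fun v hv => by
  obtain ⟨c, hc, hfgv⟩ := hfg v hv
  exact ⟨c⁻¹, inv_ne_zero hc, by rw [hfgv, inv_smul_smul₀ hc]⟩

theorem trans (hfg : ProjectivelyEq f g) (hgh : ProjectivelyEq g h) :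
    ProjectivelyEq f h := fun v hv => by
  obtain ⟨c, hc, h₁⟩ := hfg v hv
  obtain ⟨c', hc', h₂⟩ := hgh v hv
  exact ⟨c * c', mul_ne_zero hc hc', by rw [h₁, h₂, smul_smul]⟩

theorem mulVec_left [Fintype κ] (hfg : ProjectivelyEq f g) (M : Matrix κ κ F) :
    ProjectivelyEq (fun v => M *ᵥ f v) (fun v => M *ᵥ g v) := fun v hv => by
  obtain ⟨c, hc, hfgv⟩ := hfg v hv
  exact ⟨c, hc, by simp only [hfgv, mulVec_smul]⟩

theorem comp_mulVec [Fintype ι] [DecidableEq ι] (hfg : ProjectivelyEq f g) {M M' : Matrix ι ι F}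
    (hM : M' * M = 1) :
    ProjectivelyEq (fun v => f (M *ᵥ v)) (fun v => g (M *ᵥ v)) := fun v hv =>
  hfg _ fun h0 => hv <| by rw [← one_mulVec v, ← hM, ← mulVec_mulVec, h0, mulVec_zero]

end ProjectivelyEq

section PowerMap

variable {F n : Type*} [Field F] [Fintype n] [DecidableEq n]
  {C N : Matrix n n F} {d : ℕ}

theorem exists_col_pow_eq_mul
    (hCN : ProjectivelyEq (fun u => (C *ᵥ u) ^ d) (fun u => N *ᵥ u ^ d))
    (hd : d ≠ 0) (j : n) : ∃ c : F, c ≠ 0 ∧ ∀ i, C i j ^ d = c * N i j := by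
  obtain ⟨c, hc, h⟩ := hCN (Pi.single j 1) (by simp)
  refine ⟨c, hc, fun i => ?_⟩
  have hsingle : (Pi.single j 1 : n → F) ^ d = Pi.single j 1 := by
    ext l; by_cases hl : l = j <;> simp [hl, hd]
  simpa [hsingle] using congrFun h i

open Polynomial in
theorem mul_eq_mul_of_projectivelyEq_pow [CharZero F]
    (hCN : ProjectivelyEq (fun u => (C *ᵥ u) ^ d) (fun u => N *ᵥ u ^ d))
    (hd : 2 ≤ d) {i i' j k : n} (hjk : j ≠ k) (hij : C i j ≠ 0) (hi'j : C i' j ≠ 0) :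
    C i k * C i' j = C i j * C i' k := by
  have hd0 : d ≠ 0 := by omega
  obtain ⟨c, -, hcol⟩ := exists_col_pow_eq_mul hCN hd0 j
  have hline : ∀ t : F, (C i j + t * C i k) ^ d * (N i' j + t ^ d * N i' k) =
      (C i' j + t * C i' k) ^ d * (N i j + t ^ d * N i k) := by
    intro t
    set u : n → F := Pi.single j 1 + t • Pi.single k 1
    have hu : u ≠ 0 := fun h0 => by simpa [u, hjk] using congrFun h0 j
    have hud : u ^ d = Pi.single j 1 + t ^ d • Pi.single k 1 := by
      ext l
      by_cases hlj : l = j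
      · subst hlj; simp [u, hjk]
      · by_cases hlk : l = k
        · subst hlk; simp [u, hlj]
        · simp [u, hlj, hlk, hd0]
    obtain ⟨c', -, h⟩ := hCN u hu
    have hi := congrFun h i
    have hi' := congrFun h i'
    simp only [u, hud, Pi.pow_apply, Pi.smul_apply, smul_eq_mul, mulVec_add, mulVec_smul,
      mulVec_single_one, Pi.add_apply, col_apply] at hi hi'
    rw [hi, hi']
    ring
  have hpoly : ((Polynomial.C (C i j) + X * Polynomial.C (C i k)) ^ d *
        (Polynomial.C (N i' j) + X ^ d * Polynomial.C (N i' k)) : F[X]) =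
      (Polynomial.C (C i' j) + X * Polynomial.C (C i' k)) ^ d *
        (Polynomial.C (N i j) + X ^ d * Polynomial.C (N i k)) :=
    Polynomial.funext fun t => by
      simpa only [eval_mul, eval_add, eval_pow, eval_C, eval_X] using hline t
  -- the coefficients of `t`; the factors `N _ j + t ^ d * N _ k` do not contribute as `d ≥ 2`
  have hcoeff : (d : F) * C i j ^ (d - 1) * C i k * N i' j =
      d * C i' j ^ (d - 1) * C i' k * N i j := by
    simpa [derivative_pow, zero_pow hd0, zero_pow (show d - 1 ≠ 0 by omega)]
      using congrArg (fun p : F[X] => (derivative p).eval 0) hpoly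
  have hsplit : ∀ x : F, x ^ d = x ^ (d - 1) * x := fun x => by
    rw [← pow_succ, Nat.sub_add_cancel (by omega)]
  have hprod : (d : F) * (C i j ^ (d - 1) * C i' j ^ (d - 1)) *
      (C i k * C i' j - C i j * C i' k) = 0 := by
    have h₁ := hcol i
    have h₂ := hcol i'
    rw [hsplit] at h₁ h₂
    linear_combination (d : F) * C i k * C i j ^ (d - 1) * h₂
      - (d : F) * C i' k * C i' j ^ (d - 1) * h₁ + c * hcoeff
  have hne : (d : F) * (C i j ^ (d - 1) * C i' j ^ (d - 1)) ≠ 0 := by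
    have : (d : F) ≠ 0 := Nat.cast_ne_zero.mpr hd0
    positivity
  exact sub_eq_zero.mp ((mul_eq_zero.mp hprod).resolve_left hne)

theorem eq_zero_of_projectivelyEq_pow [CharZero F]
    (hCN : ProjectivelyEq (fun u => (C *ᵥ u) ^ d) (fun u => N *ᵥ u ^ d))
    (hd : 2 ≤ d) (hC : C.det ≠ 0) {i j k : n} (hjk : j ≠ k) (hij : C i j ≠ 0) :
    C i k = 0 := by
  by_contra hik
  have hcols : ∀ r, C i k * C r j = C i j * C r k := fun r => by
    by_cases hrj : C r j = 0
    · by_cases hrk : C r k = 0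
      · simp [hrj, hrk]
      · exact (mul_eq_mul_of_projectivelyEq_pow hCN hd hjk.symm hik hrk).symm
    · exact mul_eq_mul_of_projectivelyEq_pow hCN hd hjk hij hrj
  refine hC (exists_mulVec_eq_zero_iff.mp
    ⟨C i k • Pi.single j 1 - C i j • Pi.single k 1, ?_, ?_⟩)
  · exact fun h0 => hik (by simpa [hjk] using congrFun h0 j)
  · ext r
    simp only [mulVec_sub, mulVec_smul, mulVec_single_one, Pi.sub_apply, Pi.smul_apply,
      col_apply, smul_eq_mul, Pi.zero_apply]
    linear_combination hcols r

theorem exists_forall_pow_eq_mul_of_projectivelyEq_pow [CharZero F]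
    (hCN : ProjectivelyEq (fun u => (C *ᵥ u) ^ d) (fun u => N *ᵥ u ^ d))
    (hd : 2 ≤ d) (hC : C.det ≠ 0) : ∃ c : F, c ≠ 0 ∧ ∀ i j, C i j ^ d = c * N i j := by
  have hd0 : d ≠ 0 := by omega
  cases isEmpty_or_nonempty n
  · exact ⟨1, one_ne_zero, fun i => isEmptyElim i⟩
  obtain ⟨c, hc, h⟩ := hCN 1 one_ne_zero
  refine ⟨c, hc, fun i j => ?_⟩
  obtain ⟨j₀, hj₀⟩ : ∃ j₀, C i j₀ ≠ 0 := by
    by_contra! h0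
    exact hC (det_eq_zero_of_row_eq_zero i h0)
  have hC0 : ∀ j ≠ j₀, C i j = 0 := fun j hj =>
    eq_zero_of_projectivelyEq_pow hCN hd hC (Ne.symm hj) hj₀
  have hN0 : ∀ j ≠ j₀, N i j = 0 := fun j hj => by
    obtain ⟨c', hc', hcol⟩ := exists_col_pow_eq_mul hCN hd0 j
    simpa [hC0 j hj, hc', hd0] using hcol i
  have hrow := congrFun h i
  simp only [one_pow, Pi.pow_apply, Pi.smul_apply, smul_eq_mul, mulVec, dotProduct,
    Pi.one_apply, mul_one] at hrow
  rw [Fintype.sum_eq_single j₀ hC0, Fintype.sum_eq_single j₀ hN0] at hrow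
  by_cases hj : j = j₀
  · rwa [hj]
  · simp [hC0 j hj, hN0 j hj, hd0]

end PowerMap

open ComplexConjugate

theorem conj_aeval_rat {σ : Type*} (p : MvPolynomial σ ℚ) (v : σ → ℂ) :
    conj (MvPolynomial.aeval v p) = MvPolynomial.aeval (conj ∘ v) p := by
  rw [MvPolynomial.aeval_def, MvPolynomial.aeval_def, MvPolynomial.eval₂_comp_left]
  congr 1
  exact Subsingleton.elim _ _

theorem conj_comp_mulVec {m n : Type*} [Fintype n] (M : Matrix m n ℂ) (v : n → ℂ) :
    conj ∘ (M *ᵥ v) = M.map conj *ᵥ (conj ∘ v) :=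
  funext (RingHom.map_mulVec conj M v)

theorem ProjectivelyEq.conj_of_aeval_rat {σ ι : Type*} {ψ : ι → MvPolynomial σ ℚ}
    {f : (σ → ℂ) → ι → ℂ}
    (h : ProjectivelyEq (fun v i => MvPolynomial.aeval v (ψ i)) f) :
    ProjectivelyEq f (fun v => conj ∘ f (conj ∘ v)) := by
  refine h.symm.trans fun v hv => ?_
  have hvv : conj ∘ (conj ∘ v) = v := by ext; simp
  have hv' : conj ∘ v ≠ 0 := fun h0 => hv (by rw [← hvv, h0]; ext; simp)
  obtain ⟨c, hc, hc'⟩ := h _ hv'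
  refine ⟨conj c, (map_ne_zero conj).mpr hc, funext fun i => ?_⟩
  have := congrArg conj (congrFun hc' i)
  rwa [conj_aeval_rat, hvv, Pi.smul_apply, smul_eq_mul, map_mul] at this

namespace phiD

def rot : Matrix (Fin 3) (Fin 3) ℂ := !![1, -1, 0; 1, 1, 0; 0, 0, 1]

noncomputable def rotInv : Matrix (Fin 3) (Fin 3) ℂ :=
  !![1 / 2, 1 / 2, 0; -1 / 2, 1 / 2, 0; 0, 0, 1]

def swap01 : Matrix (Fin 3) (Fin 3) ℂ := !![0, 1, 0; 1, 0, 0; 0, 0, 1]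

def twist : Fin 3 → ℂ := ![Complex.I, 1, 1]

theorem rot_mul_rotInv : rot * rotInv = 1 := by
  rw [rot, rotInv, mul_fin_three, one_fin_three]
  norm_num

theorem diagonal_twist_inv_mul : diagonal twist⁻¹ * diagonal twist = 1 := by
  rw [diagonal_mul_diagonal, ← diagonal_one]
  congr 1
  ext i
  fin_cases i <;> simp [twist]

theorem eq_diagonal_mulVec_pow (d : ℕ) (w : Fin 3 → ℂ) :
    phiD d w = diagonal twist *ᵥ (rot *ᵥ w) ^ d := by
  ext i
  fin_cases i <;> simp [phiD, twist, rot, mulVec, dotProduct, Fin.sum_univ_three]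
  ring

theorem conj_comp {d : ℕ} (hodd : Odd d) (w : Fin 3 → ℂ) :
    conj ∘ phiD d w = phiD d (swap01 *ᵥ (conj ∘ w)) := by
  ext i
  fin_cases i
  · simp [phiD, swap01, mulVec, dotProduct, Fin.sum_univ_three]
    rw [← neg_sub, hodd.neg_pow]
    ring
  · simp [phiD, swap01, mulVec, dotProduct, Fin.sum_univ_three, add_comm]
  · simp [phiD, swap01, mulVec, dotProduct, Fin.sum_univ_three]

theorem exists_cocycle {d : ℕ} (hodd : Odd d) {B B' : Matrix (Fin 3) (Fin 3) ℂ}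
    (hBB' : B * B' = 1)
    (h : ProjectivelyEq (fun v => B' *ᵥ phiD d (B *ᵥ v))
      (fun v => conj ∘ (B' *ᵥ phiD d (B *ᵥ (conj ∘ v))))) :
    ∃ K : Matrix (Fin 3) (Fin 3) ℂ, K * K.map conj = 1 ∧
      ProjectivelyEq (fun w => K *ᵥ phiD d w) (fun w => phiD d ((swap01 * K) *ᵥ w)) := by
  have hB'B : B' * B = 1 := mul_eq_one_comm.mp hBB'
  have hconj : ∀ M : Matrix (Fin 3) (Fin 3) ℂ, (M.map conj).map conj = M := fun M => by
    ext; simp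
  have hBB'c : B.map conj * B'.map conj = 1 := by
    rw [← Matrix.map_mul, hBB', Matrix.map_one _ (map_zero _) (map_one _)]
  refine ⟨B.map conj * B', ?_, ?_⟩
  · rw [Matrix.map_mul, hconj, mul_assoc, ← mul_assoc B', hB'B, one_mul, hBB'c]
  · have h' := (h.comp_mulVec hBB').mulVec_left (B.map conj)
    have hcc : ∀ v : Fin 3 → ℂ, conj ∘ (conj ∘ v) = v := fun v => by ext; simp
    simp only [conj_comp_mulVec, conj_comp hodd, hcc, mulVec_mulVec, hBB', hBB'c, one_mulVec,
      Matrix.map_mul, hconj] at h'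
    simpa only [mul_assoc] using h'

theorem projectivelyEq_pow {d : ℕ} {K : Matrix (Fin 3) (Fin 3) ℂ}
    (h : ProjectivelyEq (fun w => K *ᵥ phiD d w) (fun w => phiD d ((swap01 * K) *ᵥ w))) :
    ProjectivelyEq (fun u => ((rot * swap01 * K * rotInv) *ᵥ u) ^ d)
      (fun u => (diagonal twist⁻¹ * K * diagonal twist) *ᵥ u ^ d) := by
  have h' := (h.symm.mulVec_left (diagonal twist⁻¹)).comp_mulVec rot_mul_rotInv
  simpa only [eq_diagonal_mulVec_pow, mulVec_mulVec, ← mul_assoc, diagonal_twist_inv_mul,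
    one_mul, rot_mul_rotInv, one_mulVec] using h'

theorem rot_mul_swap01_mul_mul_rotInv (K : Matrix (Fin 3) (Fin 3) ℂ) :
    rot * swap01 * K * rotInv =
      !![(K 1 0 - K 0 0 - (K 1 1 - K 0 1)) / 2, (K 1 0 - K 0 0 + (K 1 1 - K 0 1)) / 2,
          K 1 2 - K 0 2;
        (K 1 0 + K 0 0 - (K 1 1 + K 0 1)) / 2, (K 1 0 + K 0 0 + (K 1 1 + K 0 1)) / 2,
          K 0 2 + K 1 2;
        (K 2 0 - K 2 1) / 2, (K 2 0 + K 2 1) / 2, K 2 2] := by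
  ext i j
  fin_cases i <;> fin_cases j <;>
    simp [rot, swap01, rotInv, mul_apply, Fin.sum_univ_three, vecMul, dotProduct] <;> ring

theorem eq_zero_iff_of_pow_eq_mul {d : ℕ} (hd : d ≠ 0) {K : Matrix (Fin 3) (Fin 3) ℂ}
    {c : ℂ} (hc : c ≠ 0)
    (hpow : ∀ i j, (rot * swap01 * K * rotInv) i j ^ d =
      c * (diagonal twist⁻¹ * K * diagonal twist) i j) (i j : Fin 3) :
    (rot * swap01 * K * rotInv) i j = 0 ↔ K i j = 0 := by
  rw [← pow_eq_zero_iff hd, hpow]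
  simp only [mul_diagonal, diagonal_mul]
  fin_cases i <;> fin_cases j <;> simp [twist, hc]

theorem not_exists_pow_eq_mul {d : ℕ} (hodd : Odd d) {K : Matrix (Fin 3) (Fin 3) ℂ}
    (hK : K * K.map conj = 1)
    (hrow : ∀ i j k, j ≠ k →
      (rot * swap01 * K * rotInv) i j ≠ 0 → (rot * swap01 * K * rotInv) i k = 0) :
    ¬ ∃ c : ℂ, c ≠ 0 ∧ ∀ i j,
      (rot * swap01 * K * rotInv) i j ^ d = c * (diagonal twist⁻¹ * K * diagonal twist) i j := by
  rintro ⟨c, hc, hpow⟩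
  have hd : d ≠ 0 := by rintro rfl; simp at hodd
  have hzero := eq_zero_iff_of_pow_eq_mul hd hc hpow
  rw [rot_mul_swap01_mul_mul_rotInv] at hrow hpow hzero
  have hKrow : ∀ i j k, j ≠ k → K i j ≠ 0 → K i k = 0 := fun i j k hjk hij =>
    (hzero i k).mp (hrow i j k hjk (mt (hzero i j).mp hij))
  have hKK : ∀ i j, K i 0 * conj (K 0 j) + K i 1 * conj (K 1 j) + K i 2 * conj (K 2 j) =
      (1 : Matrix (Fin 3) (Fin 3) ℂ) i j := fun i j => by
    rw [← hK, mul_apply, Fin.sum_univ_three]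
    rfl
  have hK20 : K 2 0 = 0 := by
    by_contra h20
    have h21 := hKrow 2 0 1 (by decide) h20
    simpa [h20, h21] using hrow 2 0 1 (by decide) (by simpa [h21] using h20)
  by_cases h00 : K 0 0 = 0
  · -- `K` is antidiagonal on the first two coordinates
    have hKK00 : K 0 1 * conj (K 1 0) = 1 := by simpa [h00, hK20] using hKK 0 0
    have h10 : K 1 0 ≠ 0 := fun h => by simp [h] at hKK00
    have h11 := hKrow 1 0 1 (by decide) h10
    have hC00 : K 1 0 + K 0 1 = 0 := by simpa [h00, h11] using (hzero 0 0).mpr h00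
    rw [eq_neg_of_add_eq_zero_left hC00, map_neg, mul_neg, Complex.mul_conj] at hKK00
    have : Complex.normSq (K 0 1) = -1 := by exact_mod_cast neg_eq_iff_eq_neg.mp hKK00
    linarith [Complex.normSq_nonneg (K 0 1)]
  · -- `K` is diagonal on the first two coordinates
    have h01 := hKrow 0 0 1 (by decide) h00
    have h10 : K 1 0 = 0 := by
      by_contra h10
      simpa [hKrow 1 0 1 (by decide) h10, hKrow 1 0 2 (by decide) h10, h00, h10] using hKK 1 0
    have h11 : K 1 1 = K 0 0 := by
      have hC01 : -K 0 0 + K 1 1 = 0 := by simpa [h01, h10] using (hzero 0 1).mpr h01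
      linear_combination hC01
    have h0 : (-K 0 0) ^ d = c * K 0 0 := by
      convert hpow 0 0 using 1
      · simp only [h01, h10, h11, of_apply, cons_val', cons_val_zero, empty_val', cons_val_fin_one]
        ring
      · simp only [mul_diagonal, diagonal_mul, twist, Pi.inv_apply, cons_val_zero, Complex.inv_I]
        linear_combination c * K 0 0 * Complex.I_sq
    have h1 : K 0 0 ^ d = c * K 0 0 := by simpa [h01, h10, h11, twist] using hpow 1 1
    rw [hodd.neg_pow] at h0
    exact h00 (pow_eq_zero_iff hd |>.mp (by linear_combination (h1 - h0) / 2))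

end phiD

open phiD in
theorem odd_degree_Q_not_field_of_definition (d : ℕ) (hd : 3 ≤ d) (hodd : Odd d) :
    ¬ ∃ (A : Matrix.GeneralLinearGroup (Fin 3) ℂ)
        (ψ : Fin 3 → MvPolynomial (Fin 3) ℚ),
      (∀ i, (ψ i).IsHomogeneous d) ∧
      ∀ v : Fin 3 → ℂ, v ≠ 0 → ∃ c : ℂ, c ≠ 0 ∧
        (fun i => MvPolynomial.aeval v (ψ i)) =
          c • ((↑(A⁻¹) : Matrix (Fin 3) (Fin 3) ℂ).mulVec
            (phiD d ((A : Matrix (Fin 3) (Fin 3) ℂ).mulVec v))) := by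
  rintro ⟨A, ψ, -, hψ⟩
  obtain ⟨K, hK, hKφ⟩ := exists_cocycle hodd A.mul_inv (ProjectivelyEq.conj_of_aeval_rat hψ)
  have hpow := projectivelyEq_pow hKφ
  have hdet : (rot * swap01 * K * rotInv).det ≠ 0 := by
    simp only [det_mul, ne_eq, mul_eq_zero, det_ne_zero_of_right_inverse hK, not_or]
    refine ⟨⟨?_, ?_⟩, ?_⟩ <;> simp [rot, swap01, rotInv, det_fin_three]
    norm_num
  exact not_exists_pow_eq_mul hodd hK
    (fun _ _ _ hjk => eq_zero_of_projectivelyEq_pow hpow (by omega) hdet hjk)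
    (exists_forall_pow_eq_mul_of_projectivelyEq_pow hpow (by omega) hdet)
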